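/- Let G, H, A, B, W be complex numbers with H·G ≠ 1 and let T_ab = (HG − G²)/(1−HG), T_r = M_r/(1 + (1−G)·M_f + (1−G)·M_r) with M_f = M_r = 1/(G + G⁻¹ − 2) on the left side (G ≠ 0, G+G⁻¹ ≠ 2). If the controller gain is F = −T_ab/(T_r·(1 + T_ab)) and W = F·A, then T_ab·A + T_r·(1 + T_ab)·W = 0, and moreover F simplifies to G − H (assuming 1 + T_ab ≠ 0 and T_r ≠ 0). -/

import Mathlib

/-!
With `M = 1/(G + G⁻¹ - 2) = G/(1 - G)²` the transfer to the agent output collapses to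
`T_r = G/(1 - G²)`, while `1 + T_ab = (1 - G²)/(1 - HG)`. Hence `T_r (1 + T_ab) = G/(1 - HG)` and
the gain `-T_ab/(T_r (1 + T_ab))` is `-(HG - G²)/G = G - H`.
-/

section SoftBoundary

variable {K : Type*} [Field K]

theorem mul_add_mul_neg_div_mul_eq_zero (x y a : K) (hy : y ≠ 0) :
    x * a + y * (-x / y * a) = 0 := by
  field_simp
  ring

theorem one_div_add_inv_sub_two {G : K} (hG : G ≠ 0) :
    1 / (G + G⁻¹ - 2) = G / (1 - G) ^ 2 := by
  rw [show G + G⁻¹ - 2 = (1 - G) ^ 2 / G by field_simp; ring, one_div_div]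

theorem soft_boundary_transfer_eq {G : K} (hG : G ≠ 0) (hG1 : G ≠ 1) :
    1 / (G + G⁻¹ - 2) / (1 + (1 - G) * (1 / (G + G⁻¹ - 2)) + (1 - G) * (1 / (G + G⁻¹ - 2))) =
      G / (1 - G ^ 2) := by
  have hsq : (1 - G) ^ 2 ≠ 0 := pow_ne_zero 2 (sub_ne_zero.mpr hG1.symm)
  have hden : 1 + (1 - G) * (G / (1 - G) ^ 2) + (1 - G) * (G / (1 - G) ^ 2) =
      (1 - G ^ 2) / (1 - G) ^ 2 := by
    field_simp
    ring
  rw [one_div_add_inv_sub_two hG, hden, div_div_div_cancel_right₀ hsq]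

theorem one_add_reflection_eq {G H : K} (hHG : 1 - H * G ≠ 0) :
    1 + (H * G - G ^ 2) / (1 - H * G) = (1 - G ^ 2) / (1 - H * G) := by
  field_simp
  ring

end SoftBoundary

theorem soft_boundary_controller_general (G H A W F Tab Tr Mf Mr : ℂ)
    (hHG : H * G ≠ 1) (hG0 : G ≠ 0)
    (hTab : Tab = (H * G - G ^ 2) / (1 - H * G))
    (hMf : Mf = 1 / (G + G⁻¹ - 2)) (hMr : Mr = 1 / (G + G⁻¹ - 2))
    (hTr : Tr = Mr / (1 + (1 - G) * Mf + (1 - G) * Mr))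
    (h1Tab : 1 + Tab ≠ 0)
    (hF : F = -Tab / (Tr * (1 + Tab)))
    (hW : W = F * A) :
    Tab * A + Tr * (1 + Tab) * W = 0 ∧ F = G - H := by
  have hHG' : 1 - H * G ≠ 0 := sub_ne_zero.mpr hHG.symm
  have h1Tab_eq : 1 + Tab = (1 - G ^ 2) / (1 - H * G) := hTab ▸ one_add_reflection_eq hHG'
  have hG2 : 1 - G ^ 2 ≠ 0 := (div_ne_zero_iff.mp (h1Tab_eq ▸ h1Tab)).1
  have hTr_eq : Tr = G / (1 - G ^ 2) := by
    rw [hTr, hMf, hMr]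
    exact soft_boundary_transfer_eq hG0 fun h => hG2 (by rw [h]; norm_num)
  have hloop : Tr * (1 + Tab) = G / (1 - H * G) := by
    rw [hTr_eq, h1Tab_eq]
    field_simp
  have hloop0 : Tr * (1 + Tab) ≠ 0 := hloop ▸ div_ne_zero hG0 hHG'
  refine ⟨by rw [hW, hF]; exact mul_add_mul_neg_div_mul_eq_zero Tab _ A hloop0, ?_⟩
  rw [hF, hloop, hTab]
  field_simp
  ring

theorem soft_boundary_controller (G H A W F Tab Tr Mf Mr : ℂ)
    (hHG : H * G ≠ 1) (hG0 : G ≠ 0) (hGα : G + G⁻¹ ≠ 2)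
    (hTab : Tab = (H * G - G ^ 2) / (1 - H * G))
    (hMf : Mf = 1 / (G + G⁻¹ - 2)) (hMr : Mr = 1 / (G + G⁻¹ - 2))
    (hTr : Tr = Mr / (1 + (1 - G) * Mf + (1 - G) * Mr))
    (h1Tab : 1 + Tab ≠ 0) (hTr0 : Tr ≠ 0)
    (hF : F = -Tab / (Tr * (1 + Tab)))
    (hW : W = F * A) :
    Tab * A + Tr * (1 + Tab) * W = 0 ∧ F = G - H :=
  soft_boundary_controller_general G H A W F Tab Tr Mf Mr hHG hG0 hTab hMf hMr hTr h1Tab hF hW
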